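/- arXiv:1606.02786 — 8 statements merged into one kernel-verified Lean document; each statement's English description precedes it below -/
import Mathlib

section
/- In any tournament (complete directed graph) on n vertices where each vertex i has a real value x_i and there is an edge from i to j whenever x_i > x_j + 1 (edges between vertices with |x_i - x_j| ≤ 1 may point either way), any vertex with maximum out-degree has value at least max_i x_i - 2. -/
/-- Out-degree of vertex `i` in a tournament given by `R` (edge `i → j` iff `R i j = true`). -/
def outDeg {n : ℕ} (R : Fin n → Fin n → Bool) (i : Fin n) : ℕ :=
  (Finset.univ.filter fun j => j ≠ i ∧ R i j = true).card

/-- In any tournament on `n` vertices compatible with values `x` and threshold 1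
(edge from `i` to `j` whenever `x i - x j > 1`), any vertex with maximum out-degree
has value at least `max x - 2`. -/
theorem stmt0 {n : ℕ} (x : Fin n → ℝ) (R : Fin n → Fin n → Bool)
    (hT : ∀ i j : Fin n, i ≠ j → R i j = !R j i)
    (hC : ∀ i j : Fin n, x i - x j > 1 → R i j = true)
    (v : Fin n) (hv : ∀ j, outDeg R j ≤ outDeg R v) :
    ∀ i, x i - 2 ≤ x v := by
  intro i
  by_contra h
  push_neg at h
  have hiv : x i - x v > 2 := by linarith
  have hvi : v ≠ i := by rintro rfl; linarith
  have hRiv : R i v = true := hC i v (by linarith)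
  -- N(v) ∪ {v} ⊆ N(i)
  have hsub : insert v (Finset.univ.filter fun j => j ≠ v ∧ R v j = true)
      ⊆ Finset.univ.filter fun j => j ≠ i ∧ R i j = true := by
    intro j hj
    simp only [Finset.mem_insert, Finset.mem_filter, Finset.mem_univ, true_and] at hj ⊢
    rcases hj with rfl | ⟨hjv, hRvj⟩
    · exact ⟨hvi, hRiv⟩
    · -- x j ≤ x v + 1
      have hxj : x j ≤ x v + 1 := by
        by_contra hx
        push_neg at hx
        have h1 : R j v = true := hC j v (by linarith)
        have h2 := hT v j (Ne.symm hjv)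
        rw [hRvj, h1] at h2
        simp at h2
      have hji : j ≠ i := by rintro rfl; linarith
      exact ⟨hji, hC i j (by linarith)⟩
  have hv' := hv i
  have hcard : (insert v (Finset.univ.filter fun j => j ≠ v ∧ R v j = true)).card
      = outDeg R v + 1 := by
    rw [Finset.card_insert_of_notMem (by simp)]
    rfl
  have := Finset.card_le_card hsub
  rw [hcard] at this
  have : outDeg R v + 1 ≤ outDeg R i := this
  omega
end

section
/- In a tournament on n vertices compatible with values x (threshold 1), if a vertex y satisfies x_y < max_i x_i - 2, then the out-degree of y is strictly less than the out-degree of a vertex achieving the maximum value. -/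
/-- In a tournament compatible with values `x` (threshold 1), a vertex `y` whose value
is below `max x - 2` has strictly smaller out-degree than a vertex achieving the maximum
value. -/
theorem stmt1 {n : ℕ} (x : Fin n → ℝ) (R : Fin n → Fin n → Bool)
    (hT : ∀ i j : Fin n, i ≠ j → R i j = !R j i)
    (hC : ∀ i j : Fin n, x i - x j > 1 → R i j = true)
    (m y : Fin n) (hm : ∀ i, x i ≤ x m) (hy : x y < x m - 2) :
    outDeg R y < outDeg R m := by
  have hmy : m ≠ y := by
    rintro rfl; linarith
  have hRmy : R m y = true := hC m y (by linarith)
  have hRym : R y m = false := by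
    have := hT y m (Ne.symm hmy)
    rw [this, hRmy]; rfl
  apply Finset.card_lt_card
  constructor
  · intro j hj
    simp only [Finset.mem_filter, Finset.mem_univ, true_and] at hj ⊢
    obtain ⟨hjy, hjR⟩ := hj
    have hjm : j ≠ m := by
      rintro rfl; rw [hRym] at hjR; exact Bool.false_ne_true hjR
    refine ⟨hjm, ?_⟩
    by_cases h : x m - x j > 1
    · exact hC m j h
    · exfalso
      have : x j - x y > 1 := by push_neg at h; linarith [hm j]
      have hjyR : R j y = true := hC j y this
      have := hT y j (Ne.symm hjy)
      rw [this, hjyR] at hjR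
      exact Bool.false_ne_true hjR
  · intro hsub
    have := hsub (by simp [Ne.symm hmy, hRmy] : y ∈ Finset.univ.filter fun j => j ≠ m ∧ R m j = true)
    simp at this
end

section
/- Define q : ℕ → ℝ by q(0) = 0 and suppose that for every n ≥ 1, q(n) ≤ n - 1 + (1/n) · Σ_{i=1}^{n} q(d_i) for some nonnegative integers d_1,...,d_n with each d_i < n and Σ_i d_i = n(n-1)/2. Then q(n) ≤ 2(n-1) for all n. -/
/-- If `q 0 = 0` and for each `n ≥ 1` there exist nonnegative integers `d 1, …, d n`,
each `< n` and summing to `n(n-1)/2`, such that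
`q n ≤ n - 1 + (1/n) ∑ q (d i)`, then `q n ≤ 2(n-1)` for all `n ≥ 1`. -/
theorem stmt5 (q : ℕ → ℝ) (h0 : q 0 = 0)
    (hrec : ∀ n : ℕ, 1 ≤ n → ∃ d : Fin n → ℕ,
      (∀ i, d i < n) ∧ (∑ i, d i = n * (n - 1) / 2) ∧
      q n ≤ (n : ℝ) - 1 + (1 / n) * ∑ i, q (d i)) :
    ∀ n : ℕ, 1 ≤ n → q n ≤ 2 * ((n : ℝ) - 1) := by
  intro n
  induction n using Nat.strong_induction_on with
  | _ n ih =>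
    intro hn
    obtain ⟨d, hd, hsum, hq⟩ := hrec n hn
    have key : ∀ i, q (d i) ≤ 2 * (d i : ℝ) := by
      intro i
      rcases Nat.eq_zero_or_pos (d i) with h | h
      · rw [h, h0]; norm_num
      · have h2 := ih (d i) (hd i) h
        have : (1 : ℝ) ≤ (d i : ℝ) := by exact_mod_cast h
        linarith
    have heven : 2 ∣ n * (n - 1) := by
      rcases Nat.even_or_odd n with h | h
      · exact Dvd.dvd.mul_right h.two_dvd _
      · exact Dvd.dvd.mul_left (Nat.Odd.sub_odd h odd_one).two_dvd _
    have h2sum : 2 * (∑ i, d i) = n * (n - 1) := by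
      rw [hsum, Nat.mul_div_cancel' heven]
    have hsumR : (2 : ℝ) * (∑ i, (d i : ℝ)) = n * (n - 1) := by
      have h3 := congrArg (fun m : ℕ => (m : ℝ)) h2sum
      push_cast [Nat.cast_sub hn] at h3
      linarith
    have hsq : ∑ i, q (d i) ≤ ∑ i, 2 * (d i : ℝ) := Finset.sum_le_sum fun i _ => key i
    rw [← Finset.mul_sum] at hsq
    have hnpos : (0 : ℝ) < n := by exact_mod_cast hn
    have hfin : (1 / n : ℝ) * ∑ i, q (d i) ≤ (n : ℝ) - 1 := by
      rw [div_mul_eq_mul_div, one_mul, div_le_iff₀ hnpos]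
      calc ∑ i, q (d i) ≤ (n : ℝ) * (n - 1) := hsq.trans (le_of_eq hsumR)
        _ = ((n : ℝ) - 1) * n := by ring
    linarith
end

section
/- Let k ≥ 0, k' = max{e, k/2}, λ = (ln k')/n. Then for all real t with 0 < t ≤ n, (e^{λt}/t) · (1 - e^{-k'λt})/(e^{k'λ} - 1) ≤ 1. -/
/-- Chord bound for `exp` on `[0,1]`. -/
private lemma stmt8_chord (x : ℝ) (h0 : 0 ≤ x) (h1 : x ≤ 1) :
    Real.exp x ≤ 1 + (Real.exp 1 - 1) * x := by
  have h := convexOn_exp.2 (Set.mem_univ (0:ℝ)) (Set.mem_univ (1:ℝ))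
    (by linarith : (0:ℝ) ≤ 1 - x) h0 (by ring)
  simp only [smul_eq_mul, mul_zero, mul_one, Real.exp_zero, zero_add] at h
  nlinarith [h]

/-- Main analytic lemma: `e^s - 1 ≤ s e^{(1-1/e)s}` for `s ∈ [0, e]`. -/
private lemma stmt8_main (s : ℝ) (h0 : 0 ≤ s) (h1 : s ≤ Real.exp 1) :
    Real.exp s - 1 ≤ s * Real.exp ((1 - (Real.exp 1)⁻¹) * s) := by
  set E := Real.exp 1 with hE
  have hE0 : (0:ℝ) < E := Real.exp_pos 1
  set c : ℝ := 1 - E⁻¹ with hc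
  set h : ℝ → ℝ := fun x => x * Real.exp (c * x) - Real.exp x + 1 with hh
  have hderiv : ∀ x : ℝ, HasDerivAt h (Real.exp (c * x) * (1 + c * x) - Real.exp x) x := by
    intro x
    have h1' : HasDerivAt (fun y : ℝ => c * y) c x := by
      simpa using (hasDerivAt_id x).const_mul c
    have h2 : HasDerivAt (fun y : ℝ => Real.exp (c * y)) (Real.exp (c * x) * c) x :=
      (Real.hasDerivAt_exp (c * x)).comp x h1'
    have h3 : HasDerivAt (fun y : ℝ => y * Real.exp (c * y))
        (1 * Real.exp (c * x) + x * (Real.exp (c * x) * c)) x :=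
      (hasDerivAt_id x).mul h2
    have h4 := (h3.sub (Real.hasDerivAt_exp x)).add_const 1
    have heq : Real.exp (c * x) * (1 + c * x) - Real.exp x
        = 1 * Real.exp (c * x) + x * (Real.exp (c * x) * c) - Real.exp x := by ring
    rw [hh, heq]
    exact h4
  have hmono : MonotoneOn h (Set.Icc 0 E) := by
    apply monotoneOn_of_deriv_nonneg (convex_Icc 0 E)
    · exact fun x _ => ((hderiv x).continuousAt).continuousWithinAt
    · exact fun x _ => ((hderiv x).differentiableAt).differentiableWithinAt
    · intro x hx
      rw [interior_Icc] at hx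
      rw [(hderiv x).deriv]
      have hx0 : 0 < x := hx.1
      have hxE : x < E := hx.2
      have hch : Real.exp (x * E⁻¹) ≤ 1 + c * x := by
        have hb : x * E⁻¹ ≤ 1 := by
          have h' := (div_le_one hE0).2 hxE.le
          calc x * E⁻¹ = x / E := by ring
            _ ≤ 1 := h'
        have h5 := stmt8_chord (x * E⁻¹) (by positivity) hb
        calc Real.exp (x * E⁻¹) ≤ 1 + (E - 1) * (x * E⁻¹) := h5
          _ = 1 + c * x := by rw [hc]; field_simp
      have hsplit : Real.exp x = Real.exp (c * x) * Real.exp (x * E⁻¹) := by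
        rw [← Real.exp_add]
        congr 1
        rw [hc]
        field_simp
        ring
      rw [hsplit]
      have := mul_le_mul_of_nonneg_left hch (Real.exp_pos (c * x)).le
      linarith
  have h0' : h 0 = 0 := by simp [hh]
  have hm := hmono (Set.mem_Icc.2 ⟨le_refl 0, hE0.le⟩) (Set.mem_Icc.2 ⟨h0, h1⟩) h0
  rw [h0'] at hm
  simp only [hh] at hm
  linarith

/-- For `k ≥ 0`, `k' = max{e, k/2}`, `λ = ln k' / n`, and all `0 < t ≤ n`,
`(e^{λt}/t) · (1 - e^{-k'λt})/(e^{k'λ} - 1) ≤ 1`. -/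
theorem stmt8 (n : ℕ) (hn : 1 ≤ n) (k : ℝ) (hk : 0 ≤ k)
    (k' lam : ℝ) (hk' : k' = max (Real.exp 1) (k / 2))
    (hlam : lam = Real.log k' / n) :
    ∀ t : ℝ, 0 < t → t ≤ n →
      (Real.exp (lam * t) / t) *
        ((1 - Real.exp (-(k' * lam * t))) / (Real.exp (k' * lam) - 1)) ≤ 1 := by
  intro t ht htn
  have hE0 : (0:ℝ) < Real.exp 1 := Real.exp_pos 1
  have h1E : (1:ℝ) < Real.exp 1 := by
    have := Real.exp_one_gt_d9
    linarith
  have hk'E : Real.exp 1 ≤ k' := by rw [hk']; exact le_max_left _ _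
  have hk'0 : (0:ℝ) < k' := lt_of_lt_of_le hE0 hk'E
  have hlog : 1 ≤ Real.log k' := by
    have h := Real.log_le_log hE0 hk'E
    rwa [Real.log_exp] at h
  have hn0 : (0:ℝ) < (n:ℝ) := by exact_mod_cast hn
  have hlam0 : 0 < lam := by
    rw [hlam]; exact div_pos (by linarith) hn0
  have ha : 0 < k' * lam := mul_pos hk'0 hlam0
  have hat : 0 < k' * lam * t := mul_pos ha ht
  have hD : 0 < Real.exp (k' * lam) - 1 := by
    have : (1:ℝ) < Real.exp (k' * lam) := by
      rw [← Real.exp_zero]; exact Real.exp_lt_exp.2 ha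
    linarith
  have hnum : 0 ≤ 1 - Real.exp (-(k' * lam * t)) := by
    have : Real.exp (-(k' * lam * t)) ≤ 1 := by
      rw [← Real.exp_zero]; exact Real.exp_le_exp.2 (by linarith)
    linarith
  rw [div_mul_div_comm, div_le_one (by positivity)]
  -- goal: exp(lam*t) * (1 - exp(-(k'*lam*t))) ≤ t * (exp (k'*lam) - 1)
  have hRHS : t * (k' * lam) ≤ t * (Real.exp (k' * lam) - 1) := by
    have h := Real.add_one_le_exp (k' * lam)
    apply mul_le_mul_of_nonneg_left (by linarith) ht.le
  have hlamt : lam * t ≤ Real.log k' := by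
    calc lam * t ≤ lam * n := mul_le_mul_of_nonneg_left htn hlam0.le
      _ = Real.log k' := by rw [hlam]; field_simp
  by_cases hcase : 1 ≤ lam * t
  · -- Case 1 : λt ≥ 1
    have h1 : Real.exp (lam * t) * (1 - Real.exp (-(k' * lam * t))) ≤ Real.exp (lam * t) := by
      calc Real.exp (lam * t) * (1 - Real.exp (-(k' * lam * t)))
          ≤ Real.exp (lam * t) * 1 :=
            mul_le_mul_of_nonneg_left (by linarith [Real.exp_pos (-(k' * lam * t))])
              (Real.exp_pos _).le
        _ = Real.exp (lam * t) := mul_one _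
    have h2 : Real.exp (lam * t) ≤ k' := by
      calc Real.exp (lam * t) ≤ Real.exp (Real.log k') := Real.exp_le_exp.2 hlamt
        _ = k' := Real.exp_log hk'0
    have h3 : k' ≤ t * (k' * lam) := by
      have : k' * 1 ≤ k' * (lam * t) := mul_le_mul_of_nonneg_left hcase hk'0.le
      calc k' = k' * 1 := (mul_one k').symm
        _ ≤ k' * (lam * t) := this
        _ = t * (k' * lam) := by ring
    linarith
  · -- Case 2 : λt ≤ 1
    push_neg at hcase
    have hu0 : 0 < lam * t := mul_pos hlam0 ht
    have hu1 : lam * t ≤ 1 := hcase.le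
    have hsu : k' * lam * t = k' * (lam * t) := by ring
    have key : Real.exp (lam * t) * (1 - Real.exp (-(k' * lam * t))) ≤ k' * lam * t := by
      by_cases hse : Real.exp 1 ≤ k' * lam * t
      · -- s ≥ e
        have hch := stmt8_chord (lam * t) hu0.le hu1
        have hkey2 : 1 + (Real.exp 1 - 1) * (lam * t) ≤ k' * lam * t := by
          nlinarith [mul_nonneg (by linarith : (0:ℝ) ≤ Real.exp 1 - 1)
              (by linarith : (0:ℝ) ≤ 1 - lam * t),
            mul_nonneg (by linarith : (0:ℝ) ≤ k' - Real.exp 1)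
              (by linarith : (0:ℝ) ≤ 1 - lam * t)]
        calc Real.exp (lam * t) * (1 - Real.exp (-(k' * lam * t)))
            ≤ Real.exp (lam * t) * 1 :=
              mul_le_mul_of_nonneg_left (by linarith [Real.exp_pos (-(k' * lam * t))])
                (Real.exp_pos _).le
          _ = Real.exp (lam * t) := mul_one _
          _ ≤ 1 + (Real.exp 1 - 1) * (lam * t) := hch
          _ ≤ k' * lam * t := hkey2
      · -- s ≤ e
        push_neg at hse
        have husE : (lam * t) * Real.exp 1 ≤ k' * lam * t := by
          calc (lam * t) * Real.exp 1 ≤ (lam * t) * k' :=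
              mul_le_mul_of_nonneg_left hk'E hu0.le
            _ = k' * lam * t := by ring
        have hL := stmt8_main (k' * lam * t) hat.le hse.le
        have hme1 : Real.exp (lam * t - k' * lam * t) * Real.exp (k' * lam * t)
            = Real.exp (lam * t) := by
          rw [← Real.exp_add]; congr 1; ring
        have hme2 : Real.exp (lam * t) * Real.exp (-(k' * lam * t))
            = Real.exp (lam * t - k' * lam * t) := by
          rw [← Real.exp_add]; congr 1
        have heq : Real.exp (lam * t) * (1 - Real.exp (-(k' * lam * t)))
            = Real.exp (lam * t - k' * lam * t) * (Real.exp (k' * lam * t) - 1) := by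
          rw [mul_sub, mul_sub, mul_one, mul_one, hme1, hme2]
        rw [heq]
        calc Real.exp (lam * t - k' * lam * t) * (Real.exp (k' * lam * t) - 1)
            ≤ Real.exp (lam * t - k' * lam * t) *
                ((k' * lam * t) * Real.exp ((1 - (Real.exp 1)⁻¹) * (k' * lam * t))) :=
              mul_le_mul_of_nonneg_left hL (Real.exp_pos _).le
          _ = (k' * lam * t) * Real.exp ((lam * t - k' * lam * t)
                + (1 - (Real.exp 1)⁻¹) * (k' * lam * t)) := by
              rw [Real.exp_add]; ring
          _ ≤ (k' * lam * t) * Real.exp 0 := by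
              apply mul_le_mul_of_nonneg_left _ hat.le
              apply Real.exp_le_exp.2
              have he1 : (lam * t - k' * lam * t) + (1 - (Real.exp 1)⁻¹) * (k' * lam * t)
                  = lam * t - (k' * lam * t) * (Real.exp 1)⁻¹ := by ring
              rw [he1]
              have h2 : lam * t ≤ (k' * lam * t) * (Real.exp 1)⁻¹ := by
                rw [← le_div_iff₀ hE0] at husE
                calc lam * t ≤ k' * lam * t / Real.exp 1 := husE
                  _ = (k' * lam * t) * (Real.exp 1)⁻¹ := by ring
              linarith
          _ = k' * lam * t := by rw [Real.exp_zero, mul_one]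
    calc Real.exp (lam * t) * (1 - Real.exp (-(k' * lam * t)))
        ≤ k' * lam * t := key
      _ = t * (k' * lam) := by ring
      _ ≤ t * (Real.exp (k' * lam) - 1) := hRHS
end

section
/- The function u ↦ ln((1 - e^{-u})/u) is convex on (0, ∞). -/
/-!
Write the function as `log (1 - e^{-u}) - log u`. Its second derivative is
`1/u² - e^{-u}/(1 - e^{-u})²`, which is nonnegative because `u² e^{-u} ≤ (1 - e^{-u})²`;
after factoring out `e^{-u}` this is `|u| ≤ |2 sinh (u/2)|`, i.e. `|t| ≤ sinh |t|`.
-/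

open Real Set

lemma Real.sq_le_sinh_sq (x : ℝ) : x ^ 2 ≤ sinh x ^ 2 := by
  rw [← sq_abs x, ← sq_abs (sinh x), abs_sinh]
  exact pow_le_pow_left₀ (abs_nonneg x) (self_le_sinh_iff.mpr (abs_nonneg x)) 2

lemma Real.sq_mul_exp_le_sq_exp_sub_one (x : ℝ) : x ^ 2 * exp x ≤ (exp x - 1) ^ 2 := by
  have hfactor : (exp x - 1) ^ 2 = (2 * sinh (x / 2)) ^ 2 * exp x := by
    have hsq : exp x = exp (x / 2) ^ 2 := by rw [← exp_nat_mul]; ring_nf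
    have hinv : exp (x / 2) * exp (-(x / 2)) = 1 := by rw [← exp_add]; simp
    rw [sinh_eq, hsq]
    linear_combination (2 * exp (x / 2) ^ 2 - 1 - exp (x / 2) * exp (-(x / 2))) * hinv
  rw [hfactor]
  exact mul_le_mul_of_nonneg_right (by nlinarith [sq_le_sinh_sq (x / 2)]) (exp_pos x).le

lemma one_sub_exp_neg_ne_zero {x : ℝ} (hx : x ≠ 0) : 1 - exp (-x) ≠ 0 := by
  rw [sub_ne_zero, ne_comm, Ne, exp_eq_one_iff, neg_eq_zero]
  exact hx

lemma exp_neg_div_one_sub_exp_neg_sq_le_inv_sq {x : ℝ} (hx : x ≠ 0) :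
    exp (-x) / (1 - exp (-x)) ^ 2 ≤ (x ^ 2)⁻¹ := by
  have hden : 0 < (1 - exp (-x)) ^ 2 := by have := one_sub_exp_neg_ne_zero hx; positivity
  rw [div_le_iff₀ hden, ← div_eq_inv_mul, le_div_iff₀ (by positivity), mul_comm, sub_sq_comm]
  simpa only [neg_sq] using sq_mul_exp_le_sq_exp_sub_one (-x)

lemma hasDerivAt_one_sub_exp_neg (x : ℝ) :
    HasDerivAt (fun u => 1 - exp (-u)) (exp (-x)) x := by
  simpa using (hasDerivAt_neg x).exp.const_sub 1

lemma hasDerivAt_log_one_sub_exp_neg_sub_log {x : ℝ} (hx : x ≠ 0) :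
    HasDerivAt (fun u => log (1 - exp (-u)) - log u) (exp (-x) / (1 - exp (-x)) - x⁻¹) x :=
  ((hasDerivAt_one_sub_exp_neg x).log (one_sub_exp_neg_ne_zero hx)).sub (hasDerivAt_log hx)

lemma hasDerivAt_exp_neg_div_one_sub_exp_neg_sub_inv {x : ℝ} (hx : x ≠ 0) :
    HasDerivAt (fun u => exp (-u) / (1 - exp (-u)) - u⁻¹)
      ((x ^ 2)⁻¹ - exp (-x) / (1 - exp (-x)) ^ 2) x := by
  have hquot :=
    (hasDerivAt_neg x).exp.div (hasDerivAt_one_sub_exp_neg x) (one_sub_exp_neg_ne_zero hx)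
  exact (hquot.sub (hasDerivAt_inv hx)).congr_deriv (by ring)

lemma convexOn_log_one_sub_exp_neg_sub_log :
    ConvexOn ℝ (Ioi 0) (fun u => log (1 - exp (-u)) - log u) := by
  refine convexOn_of_hasDerivWithinAt2_nonneg (convex_Ioi 0)
    (f' := fun u => exp (-u) / (1 - exp (-u)) - u⁻¹)
    (f'' := fun u => (u ^ 2)⁻¹ - exp (-u) / (1 - exp (-u)) ^ 2)
    (fun x hx =>
      (hasDerivAt_log_one_sub_exp_neg_sub_log (ne_of_gt hx)).continuousAt.continuousWithinAt)
    (fun x hx => ?_) (fun x hx => ?_) (fun x hx => ?_) <;>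
    rw [interior_Ioi, mem_Ioi] at hx
  · exact (hasDerivAt_log_one_sub_exp_neg_sub_log hx.ne').hasDerivWithinAt
  · exact (hasDerivAt_exp_neg_div_one_sub_exp_neg_sub_inv hx.ne').hasDerivWithinAt
  · exact sub_nonneg.mpr (exp_neg_div_one_sub_exp_neg_sq_le_inv_sq hx.ne')

/-- The function `u ↦ ln((1 - e^{-u})/u)` is convex on `(0, ∞)`. -/
theorem stmt9 :
    ConvexOn ℝ (Set.Ioi (0 : ℝ)) (fun u => Real.log ((1 - Real.exp (-u)) / u)) := by
  refine convexOn_log_one_sub_exp_neg_sub_log.congr fun u hu => ?_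
  rw [log_div (one_sub_exp_neg_ne_zero (ne_of_gt hu)) (ne_of_gt hu)]
end

section
/- Suppose Φ : ℕ → ℝ satisfies Φ(0) = 1 and, for all 1 ≤ i ≤ n, Φ(i) ≤ (e^{λi}/i)·Σ_{j=0}^{i-1} e^{k'λ j} where λ = (ln k')/n and k' = max{e, k/2} for some k ≥ 0. Then Φ(i) ≤ e^{k'λ i} for all 0 ≤ i ≤ n. -/
/-!
Write `T i = e^{λ i} ∑_{j<i} e^{k' λ j}`, so that `T (i+1) = e^λ (T i + e^{λ i} e^{k' λ i})`.
It suffices to show `T i ≤ i e^{k' λ i}`, and by induction this reduces to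
`i e^λ + e^{λ (i+1)} ≤ (i+1) e^{k' λ}` whenever `λ i ≤ ln k'`. There `e^{λ i}` is bounded by its
chord `1 + (k'-1) λ i` (convexity of `exp` on `[0, ln k']`, together with `ln k' ≥ 1`),
after which `1 + (k'-1) λ ≤ e^{(k'-1) λ}` finishes the estimate.
-/

open Real Finset

/-- The chord of `exp` over `[0, log K]`, weakened by `1 ≤ log K`. -/
lemma exp_le_one_add_sub_one_mul {K x : ℝ} (hK : exp 1 ≤ K) (hx₀ : 0 ≤ x) (hxK : x ≤ log K) :
    exp x ≤ 1 + (K - 1) * x := by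
  have hKpos : 0 < K := (exp_pos 1).trans_le hK
  have hlog : 1 ≤ log K := by simpa using log_le_log (exp_pos 1) hK
  have hLpos : 0 < log K := by linarith
  have hchord := convexOn_exp.2 (Set.mem_univ 0) (Set.mem_univ (log K))
    (div_nonneg (sub_nonneg.2 hxK) hLpos.le : 0 ≤ (log K - x) / log K)
    (div_nonneg hx₀ hLpos.le : 0 ≤ x / log K)
    (by rw [← add_div, sub_add_cancel, div_self hLpos.ne'])
  simp only [smul_eq_mul, mul_zero, zero_add, div_mul_cancel₀ x hLpos.ne', exp_zero,
    exp_log hKpos] at hchord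
  have hxL : x / log K ≤ x := div_le_self hx₀ hlog
  have hK1 : 0 ≤ K - 1 := by linarith [one_le_exp zero_le_one]
  calc exp x ≤ (log K - x) / log K * 1 + x / log K * K := hchord
    _ = 1 + (K - 1) * (x / log K) := by field_simp; ring
    _ ≤ 1 + (K - 1) * x := by gcongr

lemma mul_exp_add_exp_le {K a : ℝ} (hK : exp 1 ≤ K) (ha : 0 ≤ a) {i : ℝ} (hi : 0 ≤ i)
    (hai : a * i ≤ log K) :
    i * exp a + exp (a * (i + 1)) ≤ (i + 1) * exp (K * a) := by
  have hK1 : 1 ≤ K := (one_le_exp zero_le_one).trans hK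
  have hchord := exp_le_one_add_sub_one_mul hK (mul_nonneg ha hi) hai
  have htangent : 1 + (K - 1) * a ≤ exp ((K - 1) * a) := by
    linarith [add_one_le_exp ((K - 1) * a)]
  have hia : (K - 1) * (a * i) ≤ (i + 1) * ((K - 1) * a) := by
    nlinarith [mul_nonneg (sub_nonneg.2 hK1) ha]
  calc i * exp a + exp (a * (i + 1)) = exp a * (i + exp (a * i)) := by
        rw [mul_add_one, exp_add]; ring
    _ ≤ exp a * (i + (1 + (K - 1) * (a * i))) := by gcongr
    _ ≤ exp a * ((i + 1) * (1 + (K - 1) * a)) := by gcongr; linarith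
    _ ≤ exp a * ((i + 1) * exp ((K - 1) * a)) := by gcongr
    _ = (i + 1) * exp (K * a) := by rw [mul_left_comm, ← exp_add]; ring_nf

lemma exp_mul_sum_exp_le {K a : ℝ} (hK : exp 1 ≤ K) (ha : 0 ≤ a) :
    ∀ i : ℕ, a * i ≤ log K →
      exp (a * i) * ∑ j ∈ range i, exp (K * a * j) ≤ i * exp (K * a * i)
  | 0, _ => by simp
  | i + 1, hai => by
    have hai' : a * i ≤ log K := le_trans (by gcongr; simp) hai
    have ih := exp_mul_sum_exp_le hK ha i hai'
    have hstep := mul_exp_add_exp_le hK ha i.cast_nonneg hai'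
    push_cast
    calc exp (a * (i + 1)) * ∑ j ∈ range (i + 1), exp (K * a * j)
        = exp a * (exp (a * i) * ∑ j ∈ range i, exp (K * a * j))
          + exp (K * a * i) * exp (a * (i + 1)) := by
          rw [sum_range_succ, mul_add_one a, exp_add]; ring
      _ ≤ exp a * (i * exp (K * a * i)) + exp (K * a * i) * exp (a * (i + 1)) := by gcongr
      _ = exp (K * a * i) * (i * exp a + exp (a * (i + 1))) := by ring
      _ ≤ exp (K * a * i) * ((i + 1) * exp (K * a)) := by gcongr
      _ = (i + 1) * exp (K * a * (i + 1)) := by rw [mul_add_one (K * a), exp_add]; ring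

theorem stmt10_general (n : ℕ) (k : ℝ)
    (k' lam : ℝ) (hk' : k' = max (Real.exp 1) (k / 2))
    (hlam : lam = Real.log k' / n)
    (Φ : ℕ → ℝ) (h0 : Φ 0 = 1)
    (hrec : ∀ i : ℕ, 1 ≤ i → i ≤ n →
      Φ i ≤ (Real.exp (lam * i) / i) * ∑ j ∈ Finset.range i, Real.exp (k' * lam * j)) :
    ∀ i : ℕ, i ≤ n → Φ i ≤ Real.exp (k' * lam * i) := by
  have hK : exp 1 ≤ k' := hk' ▸ le_max_left _ _
  have hlog : 0 ≤ log k' := log_nonneg ((one_le_exp zero_le_one).trans hK)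
  have hlam0 : 0 ≤ lam := hlam ▸ by positivity
  intro i hin
  rcases Nat.eq_zero_or_pos i with rfl | hi
  · simp [h0]
  have hlami : lam * i ≤ log k' := by
    rw [hlam, div_mul_eq_mul_div]
    exact div_le_of_le_mul₀ n.cast_nonneg hlog (by gcongr)
  calc Φ i ≤ (exp (lam * i) / i) * ∑ j ∈ range i, exp (k' * lam * j) := hrec i hi hin
    _ = (exp (lam * i) * ∑ j ∈ range i, exp (k' * lam * j)) / i := by ring
    _ ≤ (i * exp (k' * lam * i)) / i := by
        gcongr ?_ / _; exact exp_mul_sum_exp_le hK hlam0 i hlami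
    _ = exp (k' * lam * i) := by field_simp

/-- If `Φ 0 = 1` and for all `1 ≤ i ≤ n`,
`Φ i ≤ (e^{λ i}/i) ∑_{j=0}^{i-1} e^{k' λ j}` with `λ = (ln k')/n`, `k' = max{e, k/2}`,
then `Φ i ≤ e^{k' λ i}` for all `0 ≤ i ≤ n`. -/
theorem stmt10 (n : ℕ) (hn : 1 ≤ n) (k : ℝ) (hk : 0 ≤ k)
    (k' lam : ℝ) (hk' : k' = max (Real.exp 1) (k / 2))
    (hlam : lam = Real.log k' / n)
    (Φ : ℕ → ℝ) (h0 : Φ 0 = 1)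
    (hrec : ∀ i : ℕ, 1 ≤ i → i ≤ n →
      Φ i ≤ (Real.exp (lam * i) / i) * ∑ j ∈ Finset.range i, Real.exp (k' * lam * j)) :
    ∀ i : ℕ, i ≤ n → Φ i ≤ Real.exp (k' * lam * i) :=
  stmt10_general n k k' lam hk' hlam Φ h0 hrec
end

section
/- Consider selecting the maximum by quick-select with adversarial comparator of threshold 1: at each round a uniformly random pivot p is chosen from the current multiset X, all other elements are compared to p, and X is replaced by the set of elements beating p (or {p} if none beat it). Then the final output y always satisfies y ≥ max X_0 - 2, where X_0 is the initial multiset, regardless of the (even adaptive) adversary's choices. -/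
/-- One round of quick-select with an (adaptive) adversarial comparator of threshold 1:
a pivot `p ∈ X` is chosen, `S` is the set of elements declared to beat `p` (any element
beating `p` must be at least `p - 1`, and any element more than 1 above `p` surely beats
it), and the next multiset is `S`, or `{p}` if nothing beat the pivot. -/
def QSStep (X Y : Multiset ℝ) : Prop :=
  ∃ p ∈ X, ∃ S : Multiset ℝ, S ≤ X.erase p ∧
    (∀ y ∈ S, p - 1 ≤ y) ∧
    (∀ y ∈ X.erase p, p + 1 < y → y ∈ S) ∧
    Y = if S = 0 then {p} else S

/-- Quick-select with an adversarial comparator of threshold 1 always outputs a value `y`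
with `y ≥ max X₀ - 2`, regardless of the (even adaptive) adversary's choices. -/
theorem stmt14 (X : ℕ → Multiset ℝ) (K : ℕ)
    (hstep : ∀ k, k < K → QSStep (X k) (X (k + 1)))
    (y : ℝ) (hK : X K = {y}) :
    ∀ x ∈ X 0, x - 2 ≤ y := by
  have key : ∀ k, k ≤ K → ∀ x ∈ X 0, x ∈ X k ∨ ∀ z ∈ X k, x - 2 ≤ z := by
    intro k
    induction k with
    | zero => intro _ x hx; exact Or.inl hx
    | succ n ih =>
      intro hn x hx
      have hlt : n < K := Nat.lt_of_succ_le hn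
      obtain ⟨p, hp, S, hS, hS1, hS2, hY⟩ := hstep n hlt
      have hmem_sub : ∀ z ∈ S, z ∈ X n := fun z hz =>
        Multiset.mem_of_le (le_trans hS (Multiset.erase_le _ _)) hz
      rcases ih (le_of_lt hlt) x hx with hxin | hall
      · by_cases hxS : x ∈ S
        · left
          rw [hY]
          split
          · next h0 => rw [h0] at hxS; simp at hxS
          · exact hxS
        · have hb : x - 1 ≤ p := by
            by_cases hxp : x = p
            · subst hxp; linarith
            · have hxe : x ∈ (X n).erase p := (Multiset.mem_erase_of_ne hxp).mpr hxin
              by_contra h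
              push_neg at h
              exact hxS (hS2 x hxe (by linarith))
          right
          rw [hY]
          split
          · intro z hz
            simp only [Multiset.mem_singleton] at hz
            subst hz; linarith
          · intro z hz
            have := hS1 z hz
            linarith
      · right
        rw [hY]
        split
        · intro z hz
          simp only [Multiset.mem_singleton] at hz
          subst hz; exact hall _ hp
        · intro z hz; exact hall z (hmem_sub z hz)
  intro x hx
  rcases key K le_rfl x hx with h | h
  · rw [hK] at h; simp at h; linarith
  · exact h y (by rw [hK]; simp)
end

section
/- With the adversarial comparator of threshold 1, quick-sort (recursively partitioning around a random pivot, where elements losing to the pivot go left and elements beating it go right, output in increasing order) always produces an ordering y_1,...,y_n of the input such that for all i < j, y_j ≥ y_i - 2, regardless of the (adaptive) adversary. -/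
/-- Quick-sort with an (adaptive) adversarial comparator of threshold 1: a pivot `p` is
chosen from the multiset, the remaining elements are split into those declared smaller
(each at most `p + 1`) and those declared larger (each at least `p - 1`), the two parts are
sorted recursively, and the output (in increasing order) is `LA ++ p :: LB`. -/
inductive QSort : Multiset ℝ → List ℝ → Prop
  | nil : QSort 0 []
  | step (X : Multiset ℝ) (p : ℝ) (hp : p ∈ X) (A B : Multiset ℝ)
      (hAB : X.erase p = A + B)
      (hA : ∀ a ∈ A, a ≤ p + 1) (hB : ∀ b ∈ B, p - 1 ≤ b)
      (LA LB : List ℝ) (hLA : QSort A LA) (hLB : QSort B LB) :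
      QSort X (LA ++ p :: LB)

lemma QSort.mem_of_mem {X : Multiset ℝ} {L : List ℝ} (h : QSort X L) :
    ∀ a ∈ L, a ∈ X := by
  induction h with
  | nil => simp
  | step X p hp A B hAB hA hB LA LB hLA hLB ihA ihB =>
    intro a ha
    rcases List.mem_append.1 ha with h1 | h2
    · have : a ∈ A := ihA a h1
      have : a ∈ X.erase p := by rw [hAB]; exact Multiset.mem_add.2 (Or.inl this)
      exact Multiset.mem_of_mem_erase this
    · rcases List.mem_cons.1 h2 with rfl | h3
      · exact hp
      · have : a ∈ B := ihB a h3
        have : a ∈ X.erase p := by rw [hAB]; exact Multiset.mem_add.2 (Or.inr this)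
        exact Multiset.mem_of_mem_erase this

lemma QSort.pairwise {X : Multiset ℝ} {L : List ℝ} (h : QSort X L) :
    L.Pairwise (fun a b => a - 2 ≤ b) := by
  induction h with
  | nil => simp
  | step X p hp A B hAB hA hB LA LB hLA hLB ihA ihB =>
    have hAle : ∀ a ∈ LA, a ≤ p + 1 := fun a ha => hA a (hLA.mem_of_mem a ha)
    have hBge : ∀ b ∈ LB, p - 1 ≤ b := fun b hb => hB b (hLB.mem_of_mem b hb)
    refine List.pairwise_append.2 ⟨ihA, ?_, ?_⟩
    · refine List.pairwise_cons.2 ⟨fun b hb => by linarith [hBge b hb], ihB⟩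
    · intro a ha b hb
      rcases List.mem_cons.1 hb with rfl | hb'
      · linarith [hAle a ha]
      · linarith [hAle a ha, hBge b hb']

/-- Quick-sort with an adversarial comparator of threshold 1 always produces an ordering
`y₁, …, yₙ` such that `y_j ≥ y_i - 2` whenever `i < j`, regardless of the adversary. -/
theorem stmt15 (X : Multiset ℝ) (L : List ℝ) (h : QSort X L) :
    ∀ i j : Fin L.length, (i : ℕ) < (j : ℕ) → L.get i - 2 ≤ L.get j := by
  have := h.pairwise
  rw [List.pairwise_iff_get] at this
  intro i j hij
  exact this i j hij
end
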